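/- Let a, b ∈ ℝ³ be unit vectors and let A, B be the qubit observables with eigenprojectors P^a_± = (I ± a·σ)/2 and P^b_± = (I ± b·σ)/2. Then the infimum over all 2×2 density matrices ρ of (1/2)[T₂(p_ρ^A) + T₂(q_ρ^{A→B})] equals (1/4)(1 − (a·b)²), where p_ρ^A(i) = Tr[P^a_i ρ] and q_ρ^{A→B}(j) = Σ_{i=±} Tr[P^a_i ρ] Tr[P^a_i P^b_j]. -/

import Mathlib

open Matrix
open scoped BigOperators ComplexOrder

/-- a·σ = a₁σ_x + a₂σ_y + a₃σ_z. -/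
noncomputable def pauliDot (v : Fin 3 → ℝ) : Matrix (Fin 2) (Fin 2) ℂ :=
  (v 0 : ℂ) • !![0, 1; 1, 0] + (v 1 : ℂ) • !![0, -Complex.I; Complex.I, 0]
    + (v 2 : ℂ) • !![1, 0; 0, -1]

/-- Eigenprojectors P^a_± = (I ± a·σ)/2; `blochProj a true = P^a_+`. -/
noncomputable def blochProj (v : Fin 3 → ℝ) (s : Bool) : Matrix (Fin 2) (Fin 2) ℂ :=
  (1 / 2 : ℂ) • (1 + (if s then 1 else -1 : ℂ) • pauliDot v)

/-- p_ρ^A(i) = Tr[P^a_i ρ]. -/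
noncomputable def qubitProb (a : Fin 3 → ℝ) (ρ : Matrix (Fin 2) (Fin 2) ℂ) (i : Bool) : ℝ :=
  ((blochProj a i * ρ).trace).re

/-- q_ρ^{A→B}(j) = Σ_i Tr[P^a_i ρ] Tr[P^a_i P^b_j]. -/
noncomputable def qubitProbSucc (a b : Fin 3 → ℝ) (ρ : Matrix (Fin 2) (Fin 2) ℂ)
    (j : Bool) : ℝ :=
  ∑ i : Bool, qubitProb a ρ i * ((blochProj a i * blochProj b j).trace).re

/-! Writing `p` for the distribution of `A` in the state `ρ` and `c = a·b`, the distribution `q`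
is the image of `p` under the binary symmetric channel with bias `c`, so its bias is
`q₊ - q₋ = c (p₊ - p₋)`. For a distribution `r` on two points `T₂(r) = (1 - (r₊ - r₋)²)/2`,
hence the objective equals `(2 - (1 + c²) s²)/4` with `s = p₊ - p₋ ∈ [-1, 1]`. It is minimal
at `s² = 1`, which is attained by the eigenstate `ρ = P^a_+`. -/

lemma Matrix.trace_mul_nonneg_of_isIdempotentElem {n R : Type*} [Fintype n] [CommRing R]
    [PartialOrder R] [StarRing R] [StarOrderedRing R] {P ρ : Matrix n n R} (hP : P.IsHermitian)
    (hPP : IsIdempotentElem P) (hρ : ρ.PosSemidef) : 0 ≤ (P * ρ).trace := by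
  have hconj : (P * ρ).trace = (P * ρ * Pᴴ).trace := by
    nth_rw 1 [← hPP.eq]
    rw [hP.eq, Matrix.mul_assoc, trace_mul_comm]
  rw [hconj]
  exact (hρ.mul_mul_conjTranspose_same P).trace_nonneg

lemma pauliDot_eq (v : Fin 3 → ℝ) :
    pauliDot v = !![(v 2 : ℂ), (v 0 : ℂ) - (v 1 : ℂ) * Complex.I;
      (v 0 : ℂ) + (v 1 : ℂ) * Complex.I, -(v 2 : ℂ)] := by
  ext i j
  fin_cases i <;> fin_cases j <;> simp [pauliDot]
  ring

lemma trace_pauliDot (v : Fin 3 → ℝ) : (pauliDot v).trace = 0 := by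
  simp [pauliDot_eq, trace_fin_two_of]

lemma trace_pauliDot_mul (v w : Fin 3 → ℝ) :
    (pauliDot v * pauliDot w).trace = 2 * ((∑ i, v i * w i : ℝ) : ℂ) := by
  simp only [pauliDot_eq, mul_fin_two, trace_fin_two_of, Fin.sum_univ_three]
  push_cast
  linear_combination (-2 * (v 1 : ℂ) * w 1) * Complex.I_sq

lemma pauliDot_mul_self (v : Fin 3 → ℝ) (hv : ∑ i, v i ^ 2 = 1) :
    pauliDot v * pauliDot v = 1 := by
  have h : (v 0 : ℂ) ^ 2 + (v 1 : ℂ) ^ 2 + (v 2 : ℂ) ^ 2 = 1 := by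
    simpa [Fin.sum_univ_three] using congrArg ((↑) : ℝ → ℂ) hv
  ext i j
  fin_cases i <;> fin_cases j <;> simp [pauliDot_eq]
  · linear_combination h - (v 1 : ℂ) ^ 2 * Complex.I_sq
  · ring
  · ring
  · linear_combination h - (v 1 : ℂ) ^ 2 * Complex.I_sq

lemma isHermitian_pauliDot (v : Fin 3 → ℝ) : (pauliDot v).IsHermitian := by
  ext i j
  fin_cases i <;> fin_cases j <;> simp [pauliDot_eq, conjTranspose_apply, Complex.ext_iff]

lemma isHermitian_blochProj (v : Fin 3 → ℝ) (s : Bool) : (blochProj v s).IsHermitian := by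
  cases s <;>
    simp [blochProj, IsHermitian, conjTranspose_smul, (isHermitian_pauliDot v).eq]

lemma blochProj_true_add_false (v : Fin 3 → ℝ) : blochProj v true + blochProj v false = 1 := by
  simp only [blochProj, if_true, Bool.false_eq_true, if_false, smul_add, neg_smul, one_smul]
  module

lemma isIdempotentElem_blochProj (v : Fin 3 → ℝ) (hv : ∑ i, v i ^ 2 = 1) (s : Bool) :
    IsIdempotentElem (blochProj v s) := by
  have h := pauliDot_mul_self v hv
  cases s <;>
    simp only [IsIdempotentElem, blochProj, if_true, Bool.false_eq_true, if_false, Matrix.smul_mul,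
      Matrix.mul_smul, add_mul, mul_add, one_mul, mul_one, h, neg_smul, one_smul, Matrix.neg_mul,
      Matrix.mul_neg] <;>
    module

lemma posSemidef_blochProj (v : Fin 3 → ℝ) (hv : ∑ i, v i ^ 2 = 1) (s : Bool) :
    (blochProj v s).PosSemidef := by
  have h := posSemidef_self_mul_conjTranspose (blochProj v s)
  rwa [(isHermitian_blochProj v s).eq, (isIdempotentElem_blochProj v hv s).eq] at h

lemma trace_blochProj (v : Fin 3 → ℝ) (s : Bool) : (blochProj v s).trace = 1 := by
  cases s <;> simp [blochProj, trace_add, trace_smul, trace_one, trace_pauliDot]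

lemma re_trace_blochProj_mul (a b : Fin 3 → ℝ) (i j : Bool) :
    ((blochProj a i * blochProj b j).trace).re
      = (1 + (if i then 1 else -1) * (if j then 1 else -1) * ∑ k, a k * b k) / 2 := by
  cases i <;> cases j <;>
    simp only [blochProj, if_true, Bool.false_eq_true, if_false, Matrix.smul_mul,
      Matrix.mul_smul, add_mul, mul_add, one_mul, mul_one, neg_smul, one_smul, Matrix.neg_mul,
      Matrix.mul_neg, smul_neg, neg_neg, trace_add, trace_smul, trace_neg, trace_one,
      trace_pauliDot, trace_pauliDot_mul, smul_add] <;>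
    simp <;> ring

lemma qubitProb_nonneg (a : Fin 3 → ℝ) (ha : ∑ i, a i ^ 2 = 1) {ρ : Matrix (Fin 2) (Fin 2) ℂ}
    (hρ : ρ.PosSemidef) (i : Bool) : 0 ≤ qubitProb a ρ i :=
  (Complex.nonneg_iff.1 <| trace_mul_nonneg_of_isIdempotentElem (isHermitian_blochProj a i)
    (isIdempotentElem_blochProj a ha i) hρ).1

lemma qubitProb_true_add_false (a : Fin 3 → ℝ) {ρ : Matrix (Fin 2) (Fin 2) ℂ}
    (hρ : ρ.trace = 1) : qubitProb a ρ true + qubitProb a ρ false = 1 := by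
  rw [qubitProb, qubitProb, ← Complex.add_re, ← trace_add, ← Matrix.add_mul,
    blochProj_true_add_false, Matrix.one_mul, hρ, Complex.one_re]

lemma qubitProbSucc_true_add_false (a b : Fin 3 → ℝ) {ρ : Matrix (Fin 2) (Fin 2) ℂ}
    (hρ : ρ.trace = 1) : qubitProbSucc a b ρ true + qubitProbSucc a b ρ false = 1 := by
  have hp := qubitProb_true_add_false a hρ
  simp only [qubitProbSucc, Fintype.sum_bool, re_trace_blochProj_mul, if_true,
    Bool.false_eq_true, if_false]
  linear_combination hp

lemma qubitProbSucc_true_sub_false (a b : Fin 3 → ℝ) (ρ : Matrix (Fin 2) (Fin 2) ℂ) :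
    qubitProbSucc a b ρ true - qubitProbSucc a b ρ false
      = (∑ k, a k * b k) * (qubitProb a ρ true - qubitProb a ρ false) := by
  simp only [qubitProbSucc, Fintype.sum_bool, re_trace_blochProj_mul, if_true,
    Bool.false_eq_true, if_false]
  ring

def tsallis2 {ι : Type*} [Fintype ι] (p : ι → ℝ) : ℝ := 1 - ∑ i, p i ^ 2

lemma tsallis2_bool {p : Bool → ℝ} (hp : p true + p false = 1) :
    tsallis2 p = (1 - (p true - p false) ^ 2) / 2 := by
  rw [tsallis2, Fintype.sum_bool]
  linear_combination (-(p true + p false + 1) / 2) * hp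

noncomputable def qubitTsallis2SuccAvg (a b : Fin 3 → ℝ) (ρ : Matrix (Fin 2) (Fin 2) ℂ) : ℝ :=
  (1 / 2) * (tsallis2 (qubitProb a ρ) + tsallis2 (qubitProbSucc a b ρ))

lemma qubitTsallis2SuccAvg_eq (a b : Fin 3 → ℝ) {ρ : Matrix (Fin 2) (Fin 2) ℂ}
    (hρ : ρ.trace = 1) :
    qubitTsallis2SuccAvg a b ρ = (2 - (1 + (∑ k, a k * b k) ^ 2)
      * (qubitProb a ρ true - qubitProb a ρ false) ^ 2) / 4 := by
  rw [qubitTsallis2SuccAvg, tsallis2_bool (qubitProb_true_add_false a hρ),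
    tsallis2_bool (qubitProbSucc_true_add_false a b hρ), qubitProbSucc_true_sub_false]
  ring

lemma isLeast_qubitTsallis2SuccAvg (a b : Fin 3 → ℝ) (ha : ∑ i, a i ^ 2 = 1) :
    IsLeast {x : ℝ | ∃ ρ : Matrix (Fin 2) (Fin 2) ℂ, ρ.PosSemidef ∧ ρ.trace = 1 ∧
        x = qubitTsallis2SuccAvg a b ρ} ((1 / 4) * (1 - (∑ i, a i * b i) ^ 2)) := by
  constructor
  · have htr := trace_blochProj a true
    have hp : qubitProb a (blochProj a true) true = 1 := by
      rw [qubitProb, (isIdempotentElem_blochProj a ha true).eq, htr, Complex.one_re]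
    have hf : qubitProb a (blochProj a true) false = 0 := by
      linarith [qubitProb_true_add_false a htr]
    refine ⟨blochProj a true, posSemidef_blochProj a ha true, htr, ?_⟩
    rw [qubitTsallis2SuccAvg_eq a b htr, hp, hf]
    ring
  · rintro x ⟨ρ, hρ, htr, rfl⟩
    have h0 := qubitProb_nonneg a ha hρ true
    have h1 := qubitProb_nonneg a ha hρ false
    have hs : (qubitProb a ρ true - qubitProb a ρ false) ^ 2 ≤ 1 := by
      nlinarith [qubitProb_true_add_false a htr]
    rw [qubitTsallis2SuccAvg_eq a b htr]
    nlinarith [sq_nonneg (∑ k, a k * b k)]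

theorem qubit_tsallis2_succ_EUR_general (a b : Fin 3 → ℝ)
    (ha : ∑ i, a i ^ 2 = 1) :
    sInf {x : ℝ | ∃ ρ : Matrix (Fin 2) (Fin 2) ℂ, ρ.PosSemidef ∧ ρ.trace = 1 ∧
        x = (1 / 2) * ((1 - ∑ i : Bool, qubitProb a ρ i ^ 2)
          + (1 - ∑ j : Bool, qubitProbSucc a b ρ j ^ 2))}
      = (1 / 4) * (1 - (∑ i, a i * b i) ^ 2) :=
  (isLeast_qubitTsallis2SuccAvg a b ha).csInf_eq

theorem qubit_tsallis2_succ_EUR (a b : Fin 3 → ℝ)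
    (ha : ∑ i, a i ^ 2 = 1) (hb : ∑ i, b i ^ 2 = 1) :
    sInf {x : ℝ | ∃ ρ : Matrix (Fin 2) (Fin 2) ℂ, ρ.PosSemidef ∧ ρ.trace = 1 ∧
        x = (1 / 2) * ((1 - ∑ i : Bool, qubitProb a ρ i ^ 2)
          + (1 - ∑ j : Bool, qubitProbSucc a b ρ j ^ 2))}
      = (1 / 4) * (1 - (∑ i, a i * b i) ^ 2) :=
  qubit_tsallis2_succ_EUR_general a b ha
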